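/- arXiv:1212.2813 — 4 statements merged into one kernel-verified Lean document; each statement's English description precedes it below -/
import Mathlib

section
/- For every real number A with A ≥ 0 and every natural number N ≥ 1 such that A < 4N², setting q = A/(4N²), one has ∑_{l=N+1}^∞ (2l+1)·(A/(4l²))^l ≤ q^{N+1}·( 2q/(1−q)² + (2N+3)/(1−q) ). -/
/-! For `l > N` the ratio `A / (4 l²)` is at most `q`, so the tail is dominated by the
arithmetico-geometric series `∑_{l > N} (2l + 1) qˡ`, whose sum is known in closed form. -/

theorem hasSum_affine_mul_geometric {𝕜 : Type*} [NormedField 𝕜] [CompleteSpace 𝕜] {r : 𝕜}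
    (hr : ‖r‖ < 1) (a b : 𝕜) :
    HasSum (fun n : ℕ ↦ (a * n + b) * r ^ n) (a * r / (1 - r) ^ 2 + b / (1 - r)) := by
  have hsplit : (fun n : ℕ ↦ (a * n + b) * r ^ n) = fun n : ℕ ↦ a * ((n : 𝕜) * r ^ n) + b * r ^ n := by
    funext n; ring
  rw [hsplit, mul_div_assoc, div_eq_mul_inv b]
  exact ((hasSum_coe_mul_geometric_of_norm_lt_one hr).mul_left a).add
    ((hasSum_geometric_of_norm_lt_one hr).mul_left b)

theorem hasSum_odd_mul_geometric_tail {𝕜 : Type*} [NormedField 𝕜] [CompleteSpace 𝕜] {r : 𝕜}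
    (hr : ‖r‖ < 1) (m : ℕ) :
    HasSum (fun k : ℕ ↦ (2 * ((m : 𝕜) + k) + 1) * r ^ (m + k))
      (r ^ m * (2 * r / (1 - r) ^ 2 + (2 * m + 1) / (1 - r))) := by
  have hshift : (fun k : ℕ ↦ (2 * ((m : 𝕜) + k) + 1) * r ^ (m + k))
      = fun k : ℕ ↦ r ^ m * ((2 * (k : 𝕜) + (2 * m + 1)) * r ^ k) := by
    funext k; rw [pow_add]; ring
  rw [hshift]
  exact (hasSum_affine_mul_geometric hr 2 (2 * m + 1)).mul_left (r ^ m)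

theorem tail_closed_form_bound_general (A : ℝ) (hA : 0 ≤ A) (N : ℕ)
    (hAN : A < 4 * (N : ℝ) ^ 2) (q : ℝ) (hq : q = A / (4 * (N : ℝ) ^ 2)) :
    (∑' k : ℕ,
        (2 * ((N : ℝ) + 1 + k) + 1) * (A / (4 * ((N : ℝ) + 1 + k) ^ 2)) ^ (N + 1 + k)) ≤
      q ^ (N + 1) * (2 * q / (1 - q) ^ 2 + (2 * (N : ℝ) + 3) / (1 - q)) := by
  have hden : 0 < 4 * (N : ℝ) ^ 2 := hA.trans_lt hAN
  have hq0 : 0 ≤ q := hq ▸ by positivity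
  have hq1 : ‖q‖ < 1 := by
    rw [Real.norm_of_nonneg hq0, hq]; exact (div_lt_one hden).mpr hAN
  have hmajorant := hasSum_odd_mul_geometric_tail hq1 (N + 1)
  push_cast at hmajorant
  have hratio (k : ℕ) : A / (4 * ((N : ℝ) + 1 + k) ^ 2) ≤ q :=
    hq ▸ div_le_div_of_nonneg_left hA hden (by gcongr; linarith)
  have hle (k : ℕ) : (2 * ((N : ℝ) + 1 + k) + 1) * (A / (4 * ((N : ℝ) + 1 + k) ^ 2)) ^ (N + 1 + k)
      ≤ (2 * ((N : ℝ) + 1 + k) + 1) * q ^ (N + 1 + k) := by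
    gcongr; exact hratio k
  have hsummable := hmajorant.summable.of_nonneg_of_le (fun k ↦ by positivity) hle
  exact (hasSum_le hle hsummable.hasSum hmajorant).trans_eq (by ring)

/-- Quantitative tail bound: for `0 ≤ A < 4N²`, `N ≥ 1`, with `q = A/(4N²)`,
`∑_{l=N+1}^∞ (2l+1)(A/(4l²))^l ≤ q^{N+1}(2q/(1-q)^2 + (2N+3)/(1-q))`
(the sum over `l ≥ N+1` is written via `l = N+1+k`). -/
theorem tail_closed_form_bound (A : ℝ) (hA : 0 ≤ A) (N : ℕ) (hN : 1 ≤ N)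
    (hAN : A < 4 * (N : ℝ) ^ 2) (q : ℝ) (hq : q = A / (4 * (N : ℝ) ^ 2)) :
    (∑' k : ℕ,
        (2 * ((N : ℝ) + 1 + k) + 1) * (A / (4 * ((N : ℝ) + 1 + k) ^ 2)) ^ (N + 1 + k)) ≤
      q ^ (N + 1) * (2 * q / (1 - q) ^ 2 + (2 * (N : ℝ) + 3) / (1 - q)) :=
  tail_closed_form_bound_general A hA N hAN q hq
end

section
/- For all real numbers z and l with 0 ≤ z ≤ l and 0 < l, one has ( z/(l + √(l² − z²)) )^l · exp( √(l² − z²) ) ≤ ( e·z/(2l) )^l, where e = exp 1. -/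
/-! With `s = √(l² − z²) ∈ [0, l]` and `t = s / l ∈ [0, 1]`, the claim is the `l`-th power of
`z / (l + s) · e^t ≤ e z / (2l)`, i.e. of `2 e^t ≤ e (1 + t)`. The latter follows from
`e^{1-t} ≥ 2 - t` and `(2 - t)(1 + t) = 2 + t(1 - t) ≥ 2`. -/

open Real

lemma two_mul_exp_le_exp_one_mul_one_add {t : ℝ} (h0 : 0 ≤ t) (h1 : t ≤ 1) :
    2 * exp t ≤ exp 1 * (1 + t) := by
  have hsplit : exp 1 = exp t * exp (1 - t) := by rw [← exp_add, add_sub_cancel]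
  have htangent : 2 - t ≤ exp (1 - t) := by linarith [add_one_le_exp (1 - t)]
  have hquad : 2 ≤ (2 - t) * (1 + t) := by nlinarith
  calc 2 * exp t ≤ exp t * ((2 - t) * (1 + t)) := by nlinarith [exp_pos t]
    _ ≤ exp t * (exp (1 - t) * (1 + t)) := by gcongr
    _ = exp 1 * (1 + t) := by rw [hsplit]; ring

lemma div_add_mul_exp_div_le {z l s : ℝ} (hz : 0 ≤ z) (hl : 0 < l) (hs0 : 0 ≤ s) (hsl : s ≤ l) :
    z / (l + s) * exp (s / l) ≤ exp 1 * z / (2 * l) := by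
  have hunit := two_mul_exp_le_exp_one_mul_one_add (div_nonneg hs0 hl.le)
    ((div_le_one hl).mpr hsl)
  have hscaled : 2 * l * exp (s / l) ≤ exp 1 * (l + s) :=
    calc 2 * l * exp (s / l) = l * (2 * exp (s / l)) := by ring
      _ ≤ l * (exp 1 * (1 + s / l)) := by gcongr
      _ = exp 1 * (l + s) := by field_simp
  rw [div_mul_eq_mul_div, div_le_div_iff₀ (by positivity) (by positivity)]
  nlinarith [mul_le_mul_of_nonneg_left hscaled hz]

lemma mul_exp_div_rpow {x : ℝ} (hx : 0 ≤ x) (y : ℝ) {l : ℝ} (hl : l ≠ 0) :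
    (x * exp (y / l)) ^ l = x ^ l * exp y := by
  rw [mul_rpow hx (exp_pos _).le, ← exp_mul, div_mul_cancel₀ _ hl]

theorem debye_relaxation_general (z l : ℝ) (hz : 0 ≤ z) (hl : 0 < l) :
    (z / (l + Real.sqrt (l ^ 2 - z ^ 2))) ^ l * Real.exp (Real.sqrt (l ^ 2 - z ^ 2)) ≤
      (Real.exp 1 * z / (2 * l)) ^ l := by
  set s := √(l ^ 2 - z ^ 2)
  have hs0 : 0 ≤ s := sqrt_nonneg _
  have hsl : s ≤ l := (sqrt_le_left hl.le).mpr (by nlinarith)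
  rw [← mul_exp_div_rpow (by positivity) s hl.ne']
  exact rpow_le_rpow (by positivity) (div_add_mul_exp_div_le hz hl hs0 hsl) hl.le

/-- Single-factor relaxation of the Debye-type bound:
`(z/(l+√(l²−z²)))^l · e^{√(l²−z²)} ≤ (e z/(2l))^l` for `0 ≤ z ≤ l`, `0 < l`
(real exponent: `x ^ l` is `Real.rpow`). -/
theorem debye_relaxation (z l : ℝ) (hz : 0 ≤ z) (hzl : z ≤ l) (hl : 0 < l) :
    (z / (l + Real.sqrt (l ^ 2 - z ^ 2))) ^ l * Real.exp (Real.sqrt (l ^ 2 - z ^ 2)) ≤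
      (Real.exp 1 * z / (2 * l)) ^ l :=
  debye_relaxation_general z l hz hl
end

section
/- For every real θ with 0 ≤ θ ≤ π/2, one has tan(θ/2) · exp(cos θ) ≤ (e/2) · sin θ, where e = exp 1, with the convention that both sides vanish at θ = 0 (interpreting the inequality for θ ∈ (0, π/2] and noting both sides are 0 at θ = 0). -/
/-!
By convexity, `exp` lies below its chord `1 + (e - 1) c` on `[0, 1]`, and since `e ≥ 2` this chord
lies below `(e / 2) (1 + c)`. Multiplying by `tan (θ / 2) ≥ 0` and using
`tan (θ / 2) (1 + cos θ) = sin θ` gives the claim.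
-/

open Real Set

lemma Real.exp_le_exp_one_div_two_mul_one_add {c : ℝ} (h0 : 0 ≤ c) (h1 : c ≤ 1) :
    exp c ≤ exp 1 / 2 * (1 + c) := by
  have chord : exp c ≤ (1 - c) + c * exp 1 := by
    simpa using
      convexOn_exp.2 (mem_univ 0) (mem_univ 1) (sub_nonneg.2 h1) h0 (sub_add_cancel 1 c)
  nlinarith [exp_one_gt_two]

lemma Real.tan_half_mul_one_add_cos (θ : ℝ) : tan (θ / 2) * (1 + cos θ) = sin θ := by
  obtain ⟨x, rfl⟩ : ∃ x, θ = 2 * x := ⟨θ / 2, by ring⟩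
  rw [mul_div_cancel_left₀ x two_ne_zero, tan_eq_sin_div_cos, cos_two_mul, sin_two_mul]
  by_cases hx : cos x = 0
  · simp [hx]
  · field_simp
    ring

/-- Scalar trigonometric core estimate of the relaxation step:
`tan(θ/2) · e^{cos θ} ≤ (e/2) · sin θ` for `0 ≤ θ ≤ π/2`. -/
theorem tan_exp_cos_le (θ : ℝ) (h0 : 0 ≤ θ) (h1 : θ ≤ Real.pi / 2) :
    Real.tan (θ / 2) * Real.exp (Real.cos θ) ≤ (Real.exp 1 / 2) * Real.sin θ := by
  have htan : 0 ≤ tan (θ / 2) :=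
    tan_nonneg_of_nonneg_of_le_pi_div_two (by linarith) (by linarith [pi_pos])
  have hcos : 0 ≤ cos θ := cos_nonneg_of_mem_Icc ⟨by linarith [pi_pos], h1⟩
  calc tan (θ / 2) * exp (cos θ) ≤ tan (θ / 2) * (exp 1 / 2 * (1 + cos θ)) :=
        mul_le_mul_of_nonneg_left (exp_le_exp_one_div_two_mul_one_add hcos (cos_le_one θ)) htan
    _ = exp 1 / 2 * sin θ := by rw [← tan_half_mul_one_add_cos θ]; ring
end

section
/- For every natural number l ≥ 1 and every real z, define j_l(z) = z^l / (2^{l+1} · l!) · ∫_{-1}^{1} cos(z t) · (1 − t²)^l dt (the Poisson integral representation of the spherical Bessel function of the first kind). Then |j_l(z)| ≤ ( e·|z|/(2l) )^l, where e = exp 1. -/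
/-- Poisson integral representation of the spherical Bessel function of the first kind. -/
noncomputable def sphericalBessel (l : ℕ) (z : ℝ) : ℝ :=
  z ^ l / (2 ^ (l + 1) * l.factorial) *
    ∫ t in (-1 : ℝ)..1, Real.cos (z * t) * (1 - t ^ 2) ^ l

/-!
The Poisson integrand is bounded by `1` on `[-1, 1]`, so `|j_l(z)| ≤ |z|^l / (2^l l!)`.
The remaining factor `1 / l!` is at most `(e / l)^l`, which is the single term `l^l / l!`
of the exponential series for `e^l`.
-/

open Nat Real

lemma abs_one_sub_sq_pow_le_one {t : ℝ} (ht : |t| ≤ 1) (l : ℕ) : |(1 - t ^ 2) ^ l| ≤ 1 := by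
  have ht2 : t ^ 2 ≤ 1 := by nlinarith [sq_abs t, abs_nonneg t]
  rw [abs_pow]
  exact pow_le_one₀ (abs_nonneg _) (abs_le.2 ⟨by nlinarith [sq_nonneg t], by nlinarith [sq_nonneg t]⟩)

lemma abs_integral_cos_mul_one_sub_sq_pow_le_two (l : ℕ) (z : ℝ) :
    |∫ t in (-1 : ℝ)..1, cos (z * t) * (1 - t ^ 2) ^ l| ≤ 2 := by
  have hbound : ∀ t ∈ Set.uIoc (-1 : ℝ) 1, ‖cos (z * t) * (1 - t ^ 2) ^ l‖ ≤ 1 := by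
    intro t ht
    rw [Set.uIoc_of_le (by norm_num)] at ht
    have habs : |t| ≤ 1 := abs_le.2 ⟨ht.1.le, ht.2⟩
    rw [Real.norm_eq_abs, abs_mul]
    simpa using mul_le_one₀ (abs_cos_le_one _) (abs_nonneg _) (abs_one_sub_sq_pow_le_one habs l)
  simpa [Real.norm_eq_abs] using
    (intervalIntegral.norm_integral_le_of_norm_le_const hbound).trans_eq (by norm_num)

lemma abs_sphericalBessel_le (l : ℕ) (z : ℝ) :
    |sphericalBessel l z| ≤ |z| ^ l / (2 ^ l * l !) := by
  have hden : (0 : ℝ) < 2 ^ (l + 1) * l ! := by positivity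
  calc |sphericalBessel l z|
      = |z| ^ l / (2 ^ (l + 1) * l !) *
          |∫ t in (-1 : ℝ)..1, cos (z * t) * (1 - t ^ 2) ^ l| := by
        rw [sphericalBessel, abs_mul, abs_div, abs_pow, abs_of_pos hden]
    _ ≤ |z| ^ l / (2 ^ (l + 1) * l !) * 2 :=
        mul_le_mul_of_nonneg_left (abs_integral_cos_mul_one_sub_sq_pow_le_two l z) (by positivity)
    _ = |z| ^ l / (2 ^ l * l !) := by
        rw [pow_succ]; field_simp

lemma inv_factorial_le_exp_one_div_pow (l : ℕ) : ((l ! : ℕ) : ℝ)⁻¹ ≤ (exp 1 / l) ^ l := by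
  rcases l.eq_zero_or_pos with rfl | hl
  · simp
  have hl' : (0 : ℝ) < l := by exact_mod_cast hl
  have hterm : (l : ℝ) ^ l / l ! ≤ exp 1 ^ l := by
    simpa [← Real.exp_nat_mul] using Real.pow_div_factorial_le_exp _ hl'.le l
  rw [div_pow, le_div_iff₀ (by positivity), ← div_eq_inv_mul]
  exact hterm

theorem sphericalBessel_le_exp_general (l : ℕ) (z : ℝ) :
    |sphericalBessel l z| ≤ (Real.exp 1 * |z| / (2 * (l : ℝ))) ^ l := by
  calc |sphericalBessel l z|
      ≤ |z| ^ l / (2 ^ l * l !) := abs_sphericalBessel_le l z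
    _ = (|z| / 2) ^ l * ((l ! : ℕ) : ℝ)⁻¹ := by rw [div_pow, div_mul_eq_div_div]; ring
    _ ≤ (|z| / 2) ^ l * (exp 1 / l) ^ l :=
        mul_le_mul_of_nonneg_left (inv_factorial_le_exp_one_div_pow l) (by positivity)
    _ = (exp 1 * |z| / (2 * l)) ^ l := by rw [← mul_pow]; ring_nf

/-- Relaxed spherical Bessel bound: `|j_l(z)| ≤ (e |z|/(2l))^l` for `l ≥ 1`. -/
theorem sphericalBessel_le_exp (l : ℕ) (hl : 1 ≤ l) (z : ℝ) :
    |sphericalBessel l z| ≤ (Real.exp 1 * |z| / (2 * (l : ℝ))) ^ l :=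
  sphericalBessel_le_exp_general l z
end
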